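/- The hypersequent J = (⇒p // ⇒□(¬□□p ∧ ¬□□q) // ⇒q) is valid on all symmetric Kripke frames: no symmetric model contains a branch i,j,k (iRj, jRk) such that p is false at i, □(¬□□p ∧ ¬□□q) is false at j, and q is false at k. -/
import Mathlib


inductive Fm where
  | atom : ℕ → Fm
  | neg : Fm → Fm
  | and : Fm → Fm → Fm
  | or : Fm → Fm → Fm
  | box : Fm → Fm
deriving DecidableEq

/-- Classical Kripke satisfaction. -/
def Sat {W : Type} (R : W → W → Prop) (v : W → ℕ → Prop) : Fm → W → Prop
  | .atom n, x => v x n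
  | .neg φ, x => ¬ Sat R v φ x
  | .and φ ψ, x => Sat R v φ x ∧ Sat R v ψ x
  | .or φ ψ, x => Sat R v φ x ∨ Sat R v ψ x
  | .box φ, x => ∀ y, R x y → Sat R v φ y

/-- □(¬□□p ∧ ¬□□q), with p = atom 0, q = atom 1. -/
def JFm : Fm :=
  .box (.and (.neg (.box (.box (.atom 0)))) (.neg (.box (.box (.atom 1)))))

/-- The hypersequent J = (⇒p // ⇒□(¬□□p ∧ ¬□□q) // ⇒q) is valid on
all symmetric Kripke frames: no symmetric model contains a branch i,j,k with
p false at i, □(¬□□p ∧ ¬□□q) false at j, and q false at k. -/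
theorem J_valid_KB :
    ∀ (W : Type) (R : W → W → Prop) (v : W → ℕ → Prop),
      (∀ x y, R x y → R y x) →
      ∀ i j k : W,
        ¬ (R i j ∧ R j k ∧
            ¬ Sat R v (.atom 0) i ∧ ¬ Sat R v JFm j ∧ ¬ Sat R v (.atom 1) k) := by
  rintro W R v hsym i j k ⟨hij, hjk, hp, hJ, hq⟩
  apply hJ
  intro y hjy
  have hyj : R y j := hsym _ _ hjy
  have hji : R j i := hsym _ _ hij
  refine ⟨fun h => hp ?_, fun h => hq ?_⟩
  · exact h j hyj i hji
  · exact h j hyj k hjk
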